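/- Let D be a decision sequence for a decision instance such that for every round j ∈ {1,…,T} and every alternative a ∈ C_j, the decision sequence obtained from D by replacing d_j with a has PAV-score strictly less than PAV-score(D) + n/T² (i.e., D is a local optimum of Local-Search PAV). Then D satisfies EJR. -/

import Mathlib

attribute [local instance] Classical.propDecidable

/-- A decision instance with `n ≥ 1` voters (indexed by `Fin n`), time horizon `T ≥ 1`
(rounds indexed by `Fin T`), alternatives drawn from a type `γ`, a finite nonempty set
`C j` of alternatives available in round `j`, and approval sets `A i j ⊆ C j`. -/
structure Inst (n T : ℕ) (γ : Type) where
  hn : 1 ≤ n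
  hT : 1 ≤ T
  C : Fin T → Finset γ
  hC : ∀ j, (C j).Nonempty
  A : Fin n → Fin T → Finset γ
  hA : ∀ i j, A i j ⊆ C j

namespace Inst

variable {n T : ℕ} {γ : Type}

/-- `d` is a decision sequence: one alternative of `C j` for each round `j`. -/
def ValidSeq (I : Inst n T γ) (d : Fin T → γ) : Prop := ∀ j, d j ∈ I.C j

/-- The utility of voter `i`: the number of rounds whose decision `i` approves. -/
noncomputable def util (I : Inst n T γ) (d : Fin T → γ) (i : Fin n) : ℕ :=
  Nat.card {j : Fin T // d j ∈ I.A i j}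

/-- The group `S` agrees in round `j`: some alternative is approved by all members of `S`. -/
def agrees (I : Inst n T γ) (S : Finset (Fin n)) (j : Fin T) : Prop :=
  ∃ c, ∀ i ∈ S, c ∈ I.A i j

/-- The number of rounds in which the group `S` agrees. -/
noncomputable def agreeCount (I : Inst n T γ) (S : Finset (Fin n)) : ℕ :=
  Nat.card {j : Fin T // I.agrees S j}

/-- The PAV-score of a decision sequence: `Σ_{i ∈ N} Σ_{t=1}^{U^i_D} 1/t`. -/
noncomputable def pavScore (I : Inst n T γ) (d : Fin T → γ) : ℝ :=
  ∑ i : Fin n, ∑ t ∈ Finset.range (I.util d i), (1 : ℝ) / (t + 1)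

/-- `D` satisfies EJR: for every `ℓ ≥ 1`, every `k ∈ {1,…,T}`, and every nonempty group
`S` that agrees in at least `k` rounds with `|S| ≥ ℓ·n/k`, some `i ∈ S` has `U^i_D ≥ ℓ`. -/
def EJR (I : Inst n T γ) (d : Fin T → γ) : Prop :=
  ∀ ℓ : ℕ, 1 ≤ ℓ → ∀ k : ℕ, 1 ≤ k → k ≤ T →
    ∀ S : Finset (Fin n), S.Nonempty → k ≤ I.agreeCount S →
      (ℓ : ℝ) * n / k ≤ S.card → ∃ i ∈ S, ℓ ≤ I.util d i

end Inst

section LSPAV_aux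

noncomputable def harm (m : ℕ) : ℝ := ∑ t ∈ Finset.range m, (1:ℝ)/(t+1)

lemma harm_succ (m : ℕ) : harm (m+1) = harm m + 1/(m+1) := by
  simp [harm, Finset.sum_range_succ]

lemma harm_mono : Monotone harm := by
  intro a b hab
  apply Finset.sum_le_sum_of_subset_of_nonneg (Finset.range_subset_range.2 hab)
  intro t _ _
  positivity

namespace Inst
variable {n T : ℕ} {γ : Type}

lemma util_eq_card (I : Inst n T γ) (d : Fin T → γ) (i : Fin n) :
    I.util d i = (Finset.univ.filter (fun j => d j ∈ I.A i j)).card := by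
  rw [util, Nat.card_eq_fintype_card, Fintype.card_subtype]

lemma agreeCount_eq_card (I : Inst n T γ) (S : Finset (Fin n)) :
    I.agreeCount S = (Finset.univ.filter (fun j => I.agrees S j)).card := by
  rw [agreeCount, Nat.card_eq_fintype_card, Fintype.card_subtype]

lemma pavScore_eq (I : Inst n T γ) (d : Fin T → γ) :
    I.pavScore d = ∑ i : Fin n, harm (I.util d i) := rfl

lemma util_update (I : Inst n T γ) (d : Fin T → γ) (j : Fin T) (a : γ) (i : Fin n) :
    I.util (Function.update d j a) i =
      (if a ∈ I.A i j then
        (if d j ∈ I.A i j then I.util d i else I.util d i + 1)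
      else
        (if d j ∈ I.A i j then I.util d i - 1 else I.util d i)) := by
  classical
  set W := Finset.univ.filter (fun j' => d j' ∈ I.A i j') with hWdef
  have hW' : Finset.univ.filter (fun j' => Function.update d j a j' ∈ I.A i j') =
      if a ∈ I.A i j then insert j (W.erase j) else W.erase j := by
    ext x
    rcases eq_or_ne x j with rfl | hx
    · by_cases ha : a ∈ I.A i x <;>
        simp [Function.update_self, ha, hWdef]
    · by_cases ha : a ∈ I.A i j <;>
        simp [Function.update_of_ne hx, ha, hx, hWdef]
  rw [util_eq_card, util_eq_card, hW', ← hWdef]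
  by_cases ha : a ∈ I.A i j <;> by_cases hdj : d j ∈ I.A i j <;>
    simp only [ha, hdj, if_true, if_false]
  · have hjW : j ∈ W := by simp [hWdef, hdj]
    rw [Finset.insert_erase hjW]
  · have hjW : j ∉ W := by simp [hWdef, hdj]
    rw [Finset.erase_eq_of_notMem hjW, Finset.card_insert_of_notMem hjW]
  · have hjW : j ∈ W := by simp [hWdef, hdj]
    rw [Finset.card_erase_of_mem hjW]
  · have hjW : j ∉ W := by simp [hWdef, hdj]
    rw [Finset.erase_eq_of_notMem hjW]

lemma util_pos_of_mem (I : Inst n T γ) (d : Fin T → γ) (i : Fin n) (j : Fin T)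
    (h : d j ∈ I.A i j) : 1 ≤ I.util d i := by
  rw [util_eq_card]
  exact Finset.card_pos.2 ⟨j, by simp [h]⟩

end Inst

/-- Per-voter score change when round `j` is switched to `c j`. -/
noncomputable def delta {n T : ℕ} {γ : Type} (I : Inst n T γ) (d c : Fin T → γ)
    (i : Fin n) (j : Fin T) : ℝ :=
  harm (I.util (Function.update d j (c j)) i) - harm (I.util d i)

lemma delta_bound_mem {n T : ℕ} {γ : Type} (I : Inst n T γ) (d c : Fin T → γ)
    (i : Fin n) (j : Fin T) (hc : c j ∈ I.A i j) :
    (if d j ∈ I.A i j then (0:ℝ) else 1/((I.util d i : ℝ) + 1)) ≤ delta I d c i j := by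
  unfold delta
  rw [I.util_update]
  by_cases hdj : d j ∈ I.A i j
  · simp [hc, hdj]
  · simp only [hc, hdj, if_true, if_false]
    rw [harm_succ]
    push_cast
    linarith

lemma delta_bound_gen {n T : ℕ} {γ : Type} (I : Inst n T γ) (d c : Fin T → γ)
    (i : Fin n) (j : Fin T) :
    (if d j ∈ I.A i j then -(1/(I.util d i : ℝ)) else 0) ≤ delta I d c i j := by
  unfold delta
  rw [I.util_update]
  by_cases hdj : d j ∈ I.A i j
  · have hu1 : 1 ≤ I.util d i := I.util_pos_of_mem d i j hdj
    obtain ⟨v, hv⟩ : ∃ v, I.util d i = v + 1 := ⟨I.util d i - 1, by omega⟩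
    by_cases hc : c j ∈ I.A i j
    · simp only [hc, hdj, if_true]
      rw [sub_self]
      have : (0:ℝ) < (I.util d i : ℝ) := by exact_mod_cast hu1
      have : (0:ℝ) ≤ 1/(I.util d i : ℝ) := by positivity
      linarith
    · simp only [hc, hdj, if_true, if_false]
      rw [hv]
      simp only [Nat.add_sub_cancel]
      rw [harm_succ]
      push_cast
      linarith
  · by_cases hc : c j ∈ I.A i j <;> simp only [hc, hdj, if_true, if_false]
    · have := harm_mono (Nat.le_succ (I.util d i)); linarith
    · rw [sub_self]

end LSPAV_aux

/-- every local optimum of Local-Search PAV (no single-round change increases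
the PAV-score by at least `n/T²`) satisfies EJR. -/
theorem local_search_pav_satisfies_EJR {n T : ℕ} {γ : Type} (I : Inst n T γ)
    (d : Fin T → γ) (hd : I.ValidSeq d)
    (hloc : ∀ j : Fin T, ∀ a ∈ I.C j,
      I.pavScore (Function.update d j a) < I.pavScore d + (n : ℝ) / (T : ℝ) ^ 2) :
    I.EJR d := by
  intro ℓ hℓ k hk hkT S hS hkagree hScard
  by_contra hno
  push_neg at hno
  obtain ⟨i₀, hi₀⟩ := hS
  have hn0 : (0:ℝ) < n := by exact_mod_cast I.hn
  have hT0 : (0:ℝ) < T := by exact_mod_cast I.hT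
  have hk0 : (0:ℝ) < k := by exact_mod_cast hk
  have hℓ0 : (0:ℝ) < ℓ := by exact_mod_cast hℓ
  have hScn : S.card ≤ n := by simpa using Finset.card_le_univ S
  -- ℓ ≤ k
  have hℓk : ℓ ≤ k := by
    have h1 : (ℓ:ℝ) * n / k ≤ n := hScard.trans (by exact_mod_cast hScn)
    rw [div_le_iff₀ hk0] at h1
    have h2 : (ℓ:ℝ) ≤ k := by nlinarith
    exact_mod_cast h2
  -- the agreeing rounds
  set R0 : Finset (Fin T) := Finset.univ.filter (fun j => I.agrees S j) with hR0def
  set m : ℕ := R0.card with hmdef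
  have hkm : k ≤ m := by rwa [I.agreeCount_eq_card] at hkagree
  have hmT : m ≤ T := by
    calc m ≤ Finset.univ.card := Finset.card_filter_le _ _
    _ = T := by simp
  have hR0ne : R0.Nonempty := Finset.card_pos.1 (by omega)
  -- choose witnesses
  have hchoice : ∀ j : Fin T, ∃ cc : γ, cc ∈ I.C j ∧ (I.agrees S j → ∀ i ∈ S, cc ∈ I.A i j) := by
    intro j
    by_cases h : I.agrees S j
    · obtain ⟨cc, hcc⟩ := h
      exact ⟨cc, I.hA i₀ j (hcc i₀ hi₀), fun _ => hcc⟩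
    · obtain ⟨cc, hcc⟩ := I.hC j
      exact ⟨cc, hcc, fun h' => absurd h' h⟩
  choose c hcC hcA using hchoice
  -- per-voter lower bounds on the summed change
  have key1 : ∀ i ∈ S, ((m:ℝ)+1)/ℓ - 1 ≤ ∑ j ∈ R0, delta I d c i j := by
    intro i hi
    have huℓ : I.util d i < ℓ := hno i hi
    set u : ℕ := I.util d i with hudef
    have hsum : ∑ j ∈ R0, (if d j ∈ I.A i j then (0:ℝ) else 1/((u:ℝ)+1))
        ≤ ∑ j ∈ R0, delta I d c i j := by
      apply Finset.sum_le_sum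
      intro j hj
      have hag : I.agrees S j := (Finset.mem_filter.1 hj).2
      exact delta_bound_mem I d c i j (hcA j hag i hi)
    have hLHS : ∑ j ∈ R0, (if d j ∈ I.A i j then (0:ℝ) else 1/((u:ℝ)+1))
        = ((R0.filter (fun j => ¬ d j ∈ I.A i j)).card : ℝ) / ((u:ℝ)+1) := by
      rw [Finset.sum_ite, Finset.sum_const, Finset.sum_const]
      simp only [smul_zero, zero_add, nsmul_eq_mul, mul_one_div]
    -- card bounds
    have hcpos : (R0.filter (fun j => d j ∈ I.A i j)).card ≤ u := by
      rw [hudef, I.util_eq_card]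
      apply Finset.card_le_card
      intro j hj
      simp [(Finset.mem_filter.1 hj).2]
    have hpart : (R0.filter (fun j => d j ∈ I.A i j)).card
        + (R0.filter (fun j => ¬ d j ∈ I.A i j)).card = m := by
      rw [hmdef]; exact Finset.card_filter_add_card_filter_not _
    have hcneg : (m:ℝ) - u ≤ ((R0.filter (fun j => ¬ d j ∈ I.A i j)).card : ℝ) := by
      have : m - u ≤ (R0.filter (fun j => ¬ d j ∈ I.A i j)).card := by omega
      have h2 : u ≤ m := by omega
      have := (Nat.cast_le (α := ℝ)).2 this
      rw [Nat.cast_sub h2] at this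
      exact this
    have huℓR : (u:ℝ) + 1 ≤ ℓ := by exact_mod_cast huℓ
    have hu0 : (0:ℝ) ≤ u := Nat.cast_nonneg u
    have e1 : ((m:ℝ)+1)/ℓ ≤ ((m:ℝ)+1)/((u:ℝ)+1) := by
      gcongr
    have e2 : ((m:ℝ)+1)/((u:ℝ)+1) - 1 = ((m:ℝ) - u)/((u:ℝ)+1) := by
      field_simp
      ring
    have e3 : ((m:ℝ) - u)/((u:ℝ)+1)
        ≤ ((R0.filter (fun j => ¬ d j ∈ I.A i j)).card : ℝ)/((u:ℝ)+1) := by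
      gcongr
    rw [hLHS] at hsum
    linarith
  have key2 : ∀ i : Fin n, (-1:ℝ) ≤ ∑ j ∈ R0, delta I d c i j := by
    intro i
    set u : ℕ := I.util d i with hudef
    have hsum : ∑ j ∈ R0, (if d j ∈ I.A i j then -(1/(u:ℝ)) else 0)
        ≤ ∑ j ∈ R0, delta I d c i j :=
      Finset.sum_le_sum (fun j _ => delta_bound_gen I d c i j)
    have hLHS : ∑ j ∈ R0, (if d j ∈ I.A i j then -(1/(u:ℝ)) else 0)
        = -(((R0.filter (fun j => d j ∈ I.A i j)).card : ℝ) / (u:ℝ)) := by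
      rw [Finset.sum_ite, Finset.sum_const, Finset.sum_const]
      simp only [smul_zero, add_zero, nsmul_eq_mul]
      ring
    have hcpos : (R0.filter (fun j => d j ∈ I.A i j)).card ≤ u := by
      rw [hudef, I.util_eq_card]
      apply Finset.card_le_card
      intro j hj
      simp [(Finset.mem_filter.1 hj).2]
    rw [hLHS] at hsum
    rcases Nat.eq_zero_or_pos u with h0 | hpos
    · have : (R0.filter (fun j => d j ∈ I.A i j)).card = 0 := by omega
      rw [this] at hsum
      simp at hsum
      linarith
    · have hu0 : (0:ℝ) < u := by exact_mod_cast hpos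
      have hcR : ((R0.filter (fun j => d j ∈ I.A i j)).card : ℝ) ≤ u := by exact_mod_cast hcpos
      have hdiv : ((R0.filter (fun j => d j ∈ I.A i j)).card : ℝ) / (u:ℝ) ≤ 1 :=
        (div_le_one hu0).2 hcR
      linarith [hsum]
  -- total change decomposition
  have hdecomp : ∀ j : Fin T,
      I.pavScore (Function.update d j (c j)) - I.pavScore d = ∑ i : Fin n, delta I d c i j := by
    intro j
    rw [I.pavScore_eq, I.pavScore_eq, ← Finset.sum_sub_distrib]
    rfl
  -- upper bound
  have hupper : ∑ j ∈ R0, (∑ i : Fin n, delta I d c i j) < (m:ℝ) * ((n:ℝ)/(T:ℝ)^2) := by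
    have h1 : ∀ j ∈ R0, ∑ i : Fin n, delta I d c i j < (n:ℝ)/(T:ℝ)^2 := by
      intro j _
      have := hloc j (c j) (hcC j)
      rw [← hdecomp j]
      linarith
    calc ∑ j ∈ R0, (∑ i : Fin n, delta I d c i j)
        < ∑ j ∈ R0, (n:ℝ)/(T:ℝ)^2 := Finset.sum_lt_sum_of_nonempty hR0ne h1
      _ = (m:ℝ) * ((n:ℝ)/(T:ℝ)^2) := by rw [Finset.sum_const]; simp [hmdef, mul_comm]
  -- lower bound
  have hlower : (n:ℝ)/k ≤ ∑ j ∈ R0, (∑ i : Fin n, delta I d c i j) := by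
    rw [Finset.sum_comm]
    have hsplit := Finset.sum_sdiff (f := fun i => ∑ j ∈ R0, delta I d c i j)
      (Finset.subset_univ S)
    have hSsum : (S.card:ℝ) * (((m:ℝ)+1)/ℓ - 1) ≤ ∑ i ∈ S, ∑ j ∈ R0, delta I d c i j := by
      calc (S.card:ℝ) * (((m:ℝ)+1)/ℓ - 1) = ∑ _i ∈ S, (((m:ℝ)+1)/ℓ - 1) := by
            rw [Finset.sum_const]; simp [mul_comm]
        _ ≤ _ := Finset.sum_le_sum key1
    have hCsum : -(((n:ℝ) - S.card)) ≤ ∑ i ∈ Finset.univ \ S, ∑ j ∈ R0, delta I d c i j := by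
      have hcard : ((Finset.univ \ S).card : ℝ) = (n:ℝ) - S.card := by
        rw [Finset.card_sdiff_of_subset (Finset.subset_univ S)]
        have : S.card ≤ Finset.univ.card := Finset.card_le_univ S
        push_cast [Nat.cast_sub this]
        simp
      calc -(((n:ℝ) - S.card)) = ∑ _i ∈ Finset.univ \ S, (-1:ℝ) := by
            rw [Finset.sum_const, nsmul_eq_mul, hcard]; ring
        _ ≤ _ := Finset.sum_le_sum (fun i _ => key2 i)
    -- combine
    have htot : (S.card:ℝ) * (((m:ℝ)+1)/ℓ) - n ≤ ∑ i : Fin n, ∑ j ∈ R0, delta I d c i j := by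
      rw [← hsplit]
      have hsc : (S.card : ℝ) ≤ n := by exact_mod_cast hScn
      nlinarith [hSsum, hCsum]
    have hmul : (n:ℝ) * ((m:ℝ)+1) / k ≤ (S.card:ℝ) * (((m:ℝ)+1)/ℓ) := by
      have hnonneg : (0:ℝ) ≤ ((m:ℝ)+1)/ℓ := by positivity
      have := mul_le_mul_of_nonneg_right hScard hnonneg
      calc (n:ℝ) * ((m:ℝ)+1) / k = (ℓ:ℝ) * n / k * (((m:ℝ)+1)/ℓ) := by
            field_simp
        _ ≤ _ := this
    have hfin : (n:ℝ)/k ≤ (n:ℝ) * ((m:ℝ)+1) / k - n := by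
      rw [div_le_iff₀ hk0, sub_mul, div_mul_cancel₀ _ (ne_of_gt hk0)]
      have hkmR : (k:ℝ) ≤ m := by exact_mod_cast hkm
      nlinarith
    linarith
  -- contradiction
  have hfinal : (m:ℝ) * ((n:ℝ)/(T:ℝ)^2) ≤ (n:ℝ)/k := by
    have hmTR : (m:ℝ) ≤ T := by exact_mod_cast hmT
    have hkTR : (k:ℝ) ≤ T := by exact_mod_cast hkT
    have h1 : (m:ℝ) * ((n:ℝ)/(T:ℝ)^2) ≤ (T:ℝ) * ((n:ℝ)/(T:ℝ)^2) := by
      gcongr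
    have h2 : (T:ℝ) * ((n:ℝ)/(T:ℝ)^2) = (n:ℝ)/T := by
      field_simp
    have h3 : (n:ℝ)/T ≤ (n:ℝ)/k := by
      gcongr
    linarith
  linarith
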